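/- arXiv:2309.00979 — 3 statements merged into one kernel-verified Lean document; each statement's English description precedes it below -/
import Mathlib

section
/- For any real numbers λ ≥ 0 and μ₁, μ₂, μ₃ ∈ [0, 2], the quantity c = (−λ²(μ₁μ₂ + μ₁μ₃ + μ₂μ₃) − λ³μ₁μ₂μ₃) / ((1+λμ₁)(1+λμ₂)(1+λμ₃)) satisfies |c| ≤ 1. -/
/-! With `xᵢ = λμᵢ ≥ 0` the numerator is `-(e₂ + e₃)` and the denominator is
`1 + e₁ + e₂ + e₃`, where `eₖ` are the elementary symmetric polynomials in the `xᵢ`;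
since all `eₖ ≥ 0`, the quotient lies in `[-1, 0]`. -/

theorem abs_neg_esymm_div_prod_one_add_le_one {x y z : ℝ} (hx : 0 ≤ x) (hy : 0 ≤ y)
    (hz : 0 ≤ z) :
    |(-(x * y + x * z + y * z) - x * y * z) / ((1 + x) * (1 + y) * (1 + z))| ≤ 1 := by
  have hprod : (1 + x) * (1 + y) * (1 + z)
      = 1 + (x + y + z) + (x * y + x * z + y * z) + x * y * z := by ring
  have he1 : 0 ≤ x + y + z := by positivity
  have he2 : 0 ≤ x * y + x * z + y * z := by positivity
  have he3 : 0 ≤ x * y * z := by positivity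
  have hden : 0 < (1 + x) * (1 + y) * (1 + z) := by positivity
  rw [abs_div, abs_of_pos hden, div_le_one hden, abs_le]
  constructor <;> linarith

theorem stmt_0 (lam mu1 mu2 mu3 : ℝ) (hlam : 0 ≤ lam)
    (h1 : mu1 ∈ Set.Icc (0:ℝ) 2) (h2 : mu2 ∈ Set.Icc (0:ℝ) 2)
    (h3 : mu3 ∈ Set.Icc (0:ℝ) 2) :
    |(-lam^2 * (mu1*mu2 + mu1*mu3 + mu2*mu3) - lam^3 * (mu1*mu2*mu3)) /
      ((1 + lam*mu1) * (1 + lam*mu2) * (1 + lam*mu3))| ≤ 1 := by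
  convert abs_neg_esymm_div_prod_one_add_le_one (mul_nonneg hlam h1.1)
    (mul_nonneg hlam h2.1) (mul_nonneg hlam h3.1) using 3
  ring
end

section
/- Let κ > 0 and let G(y,x) be the Dirichlet Green's function of ∂_yy − κ² on [0,1]. For fixed 0 < a < b < 1, real data g_a, g_b, and continuous f on [a,b], suppose u(x) = ∂_y G(b,x) φ_b − ∂_y G(a,x) φ_a + ∫_a^b G(y,x) f(y) dy for constants φ_a, φ_b. If u(a+) = g_a and u(b−) = g_b, then (φ_a, φ_b) solves the 2×2 linear system ½ φ(x) + (∂_y G(b,x) φ_b − ∂_y G(a,x) φ_a) = g(x) − ∫_a^b G(y,x) f(y) dy for x ∈ {a, b}, where φ(a) = φ_a, φ(b) = φ_b, g(a) = g_a, g(b) = g_b. -/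
/-
On (a, b) each double-layer term is a single smooth branch of ∂_y G, and the volume potential
is continuous in x, so u agrees there with a continuous function whose values at a and b are the
one-sided limits g_a, g_b. The branches of ∂_y G for y < x and for x < y differ on the diagonal
by exactly 1, because sinh(κx) cosh(κ(1-x)) + cosh(κx) sinh(κ(1-x)) = sinh κ; since G8y takes
their average there, the limit from inside is the principal value ∓ ½ φ.
-/

/-- Green's function of ∂_yy − κ² on [0,1] with homogeneous Dirichlet BCs. -/
noncomputable def G8 (kappa y x : ℝ) : ℝ :=
  -(Real.sinh (kappa * min x y) * Real.sinh (kappa * (1 - max x y))) /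
    (kappa * Real.sinh kappa)

/-- ∂_y G(y,x): one-sided expressions off the diagonal, principal value
(average of the one-sided limits) on the diagonal y = x. -/
noncomputable def G8y (kappa y x : ℝ) : ℝ :=
  if y < x then -(Real.cosh (kappa * y) * Real.sinh (kappa * (1 - x))) / Real.sinh kappa
  else if x < y then (Real.sinh (kappa * x) * Real.cosh (kappa * (1 - y))) / Real.sinh kappa
  else (-(Real.cosh (kappa * y) * Real.sinh (kappa * (1 - x)))
        + Real.sinh (kappa * x) * Real.cosh (kappa * (1 - y))) / (2 * Real.sinh kappa)

open Set Filter Topology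

noncomputable def dGLower (kappa y x : ℝ) : ℝ :=
  -(Real.cosh (kappa * y) * Real.sinh (kappa * (1 - x))) / Real.sinh kappa

noncomputable def dGUpper (kappa y x : ℝ) : ℝ :=
  Real.sinh (kappa * x) * Real.cosh (kappa * (1 - y)) / Real.sinh kappa

lemma G8y_of_lt {kappa y x : ℝ} (h : y < x) : G8y kappa y x = dGLower kappa y x := by
  rw [G8y, if_pos h, dGLower]

lemma G8y_of_gt {kappa y x : ℝ} (h : x < y) : G8y kappa y x = dGUpper kappa y x := by
  rw [G8y, if_neg h.not_gt, if_pos h, dGUpper]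

lemma G8y_self (kappa x : ℝ) : G8y kappa x x = (dGLower kappa x x + dGUpper kappa x x) / 2 := by
  rw [G8y, if_neg (lt_irrefl x), if_neg (lt_irrefl x), dGLower, dGUpper]
  ring

lemma dGUpper_self_sub_dGLower_self {kappa : ℝ} (hk : kappa ≠ 0) (x : ℝ) :
    dGUpper kappa x x - dGLower kappa x x = 1 := by
  have hs : Real.sinh kappa ≠ 0 := Real.sinh_ne_zero.2 hk
  have hadd : Real.sinh (kappa * x) * Real.cosh (kappa * (1 - x))
      + Real.cosh (kappa * x) * Real.sinh (kappa * (1 - x)) = Real.sinh kappa := by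
    rw [← Real.sinh_add]; ring_nf
  rw [dGUpper, dGLower]
  field_simp
  linear_combination hadd

lemma continuous_intervalIntegral_mul {K : ℝ → ℝ → ℝ} (hK : Continuous (Function.uncurry K))
    {f : ℝ → ℝ} {a b : ℝ} (hab : a ≤ b) (hf : ContinuousOn f (Icc a b)) :
    Continuous fun x => ∫ y in a..b, K y x * f y := by
  set g : ℝ → ℝ := fun y => f (max a (min b y))
  have hg : Continuous g :=
    hf.comp_continuous (by fun_prop) fun y => ⟨le_max_left _ _, max_le hab (min_le_left _ _)⟩
  have hfg : ∀ x, (∫ y in a..b, K y x * f y) = ∫ y in a..b, K y x * g y := fun x =>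
    intervalIntegral.integral_congr fun y hy => by
      rw [uIcc_of_le hab] at hy
      simp only [g, min_eq_right hy.2, max_eq_right hy.1]
  simp only [hfg]
  exact intervalIntegral.continuous_parametric_intervalIntegral_of_continuous'
    (by fun_prop) a b

section OneSidedLimits

variable {α β : Type*} [TopologicalSpace α] [LinearOrder α] [OrderTopology α] [DenselyOrdered α]
  [TopologicalSpace β] [T2Space β] {u w : α → β} {a b : α} {l : β}

lemma eq_of_tendsto_nhdsGT_of_eqOn_Ioo (hab : a < b) (hw : ContinuousAt w a)
    (huw : EqOn u w (Ioo a b)) (hu : Tendsto u (𝓝[>] a) (𝓝 l)) : l = w a := by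
  have := nhdsGT_neBot_of_exists_gt ⟨b, hab⟩
  refine tendsto_nhds_unique hu (Tendsto.congr' ?_ (hw.mono_left nhdsWithin_le_nhds))
  exact eventuallyEq_of_mem (Ioo_mem_nhdsGT hab) fun x hx => (huw hx).symm

lemma eq_of_tendsto_nhdsLT_of_eqOn_Ioo (hab : a < b) (hw : ContinuousAt w b)
    (huw : EqOn u w (Ioo a b)) (hu : Tendsto u (𝓝[<] b) (𝓝 l)) : l = w b := by
  have := nhdsLT_neBot_of_exists_lt ⟨a, hab⟩
  refine tendsto_nhds_unique hu (Tendsto.congr' ?_ (hw.mono_left nhdsWithin_le_nhds))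
  exact eventuallyEq_of_mem (Ioo_mem_nhdsLT hab) fun x hx => (huw hx).symm

end OneSidedLimits

theorem stmt_8_general (kappa a b ga gb phia phib : ℝ) (f : ℝ → ℝ)
    (hk : 0 < kappa) (hab : a < b)
    (hf : ContinuousOn f (Set.Icc a b))
    (u : ℝ → ℝ)
    (hu : ∀ x, u x = G8y kappa b x * phib - G8y kappa a x * phia
        + ∫ y in a..b, G8 kappa y x * f y)
    (hua : Filter.Tendsto u (nhdsWithin a (Set.Ioi a)) (nhds ga))
    (hub : Filter.Tendsto u (nhdsWithin b (Set.Iio b)) (nhds gb)) :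
    ((1/2) * phia + (G8y kappa b a * phib - G8y kappa a a * phia)
        = ga - ∫ y in a..b, G8 kappa y a * f y) ∧
    ((1/2) * phib + (G8y kappa b b * phib - G8y kappa a b * phia)
        = gb - ∫ y in a..b, G8 kappa y b * f y) := by
  set V : ℝ → ℝ := fun x => ∫ y in a..b, G8 kappa y x * f y
  have hV : Continuous V := continuous_intervalIntegral_mul (by unfold G8; fun_prop) hab.le hf
  set w : ℝ → ℝ := fun x => dGUpper kappa b x * phib - dGLower kappa a x * phia + V x
  have hw : Continuous w := by unfold w dGUpper dGLower; fun_prop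
  have huw : EqOn u w (Ioo a b) := fun x hx => by
    rw [hu, G8y_of_gt hx.2, G8y_of_lt hx.1]
  have hga : ga = w a := eq_of_tendsto_nhdsGT_of_eqOn_Ioo hab hw.continuousAt huw hua
  have hgb : gb = w b := eq_of_tendsto_nhdsLT_of_eqOn_Ioo hab hw.continuousAt huw hub
  have jump_a := dGUpper_self_sub_dGLower_self hk.ne' a
  have jump_b := dGUpper_self_sub_dGLower_self hk.ne' b
  rw [G8y_of_gt hab, G8y_of_lt hab, G8y_self, G8y_self]
  constructor
  · linear_combination -hga - phia / 2 * jump_a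
  · linear_combination -hgb - phib / 2 * jump_b

theorem stmt_8 (kappa a b ga gb phia phib : ℝ) (f : ℝ → ℝ)
    (hk : 0 < kappa) (ha : 0 < a) (hab : a < b) (hb : b < 1)
    (hf : ContinuousOn f (Set.Icc a b))
    (u : ℝ → ℝ)
    (hu : ∀ x, u x = G8y kappa b x * phib - G8y kappa a x * phia
        + ∫ y in a..b, G8 kappa y x * f y)
    (hua : Filter.Tendsto u (nhdsWithin a (Set.Ioi a)) (nhds ga))
    (hub : Filter.Tendsto u (nhdsWithin b (Set.Iio b)) (nhds gb)) :
    ((1/2) * phia + (G8y kappa b a * phib - G8y kappa a a * phia)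
        = ga - ∫ y in a..b, G8 kappa y a * f y) ∧
    ((1/2) * phib + (G8y kappa b b * phib - G8y kappa a b * phia)
        = gb - ∫ y in a..b, G8 kappa y b * f y) :=
  stmt_8_general kappa a b ga gb phia phib f hk hab hf u hu hua hub
end

section
/- Let v be a function on [0,1], smooth on [0,a], [a,b], [b,1] with 0 < a < b < 1 and satisfying the jump conditions [v](a) = [v'](a) = 0, [v''](a) = J at x = a. Let x_{i-1} < a ≤ x_i < x_{i+1} be uniform grid points with spacing h. Then the corrected central difference (v(x_{i+1}) − 2v(x_i) + v(x_{i-1}))/h² differs from v''(x_i) (one-sided value from the right of a) by (a − x_{i-1})²J/(2h²) + O(h), assuming v is three times continuously differentiable on each side with bounded third derivatives. -/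
/-!
Put `w = vL - vR`, so that `v = vR + w` left of `a` and `v = vR` right of it. Since
`w a = w' a = 0` and `w'' a = J`, Taylor's theorem at `a` gives
`w x_{i-1} = J (x_{i-1} - a)² / 2 + O(h³)`: after division by `h²` this is the correction term
up to `O(h)`. What remains is the central difference of the smooth function `vR` at `x_i`,
which approximates `vR'' x_i` to `O(h)` by second-order Taylor expansions about `x_i`.
-/

open Nat Set

theorem abs_sub_taylor_le {f : ℝ → ℝ} {n : ℕ} {M : ℝ} (hf : ContDiff ℝ (n + 1) f)
    (hb : ∀ y, |iteratedDeriv (n + 1) f y| ≤ M) (x₀ x : ℝ) :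
    |f x - ∑ k ∈ Finset.range (n + 1), iteratedDeriv k f x₀ * (x - x₀) ^ k / k !|
      ≤ M * |x - x₀| ^ (n + 1) / (n + 1)! := by
  rcases eq_or_ne x₀ x with rfl | hx
  · simp [Finset.sum_range_succ', zero_pow_eq]
  obtain ⟨y, -, hy⟩ := taylor_mean_remainder_lagrange_iteratedDeriv hx hf.contDiffOn
  have htaylor : taylorWithinEval f n (uIcc x₀ x) x₀ x
      = ∑ k ∈ Finset.range (n + 1), iteratedDeriv k f x₀ * (x - x₀) ^ k / k ! := by
    rw [taylor_within_apply]
    refine Finset.sum_congr rfl fun k hk => ?_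
    rw [iteratedDerivWithin_eq_iteratedDeriv (uniqueDiffOn_uIcc hx) _ left_mem_uIcc, smul_eq_mul]
    · ring
    · exact hf.contDiffAt.of_le (by exact_mod_cast (Finset.mem_range.1 hk).le)
  rw [← htaylor, hy, abs_div, abs_mul, abs_pow, abs_of_pos (by positivity : (0 : ℝ) < (n + 1)!)]
  gcongr
  exact hb y

theorem abs_sub_taylor_two_le {f : ℝ → ℝ} {M : ℝ} (hf : ContDiff ℝ 3 f)
    (hb : ∀ y, |iteratedDeriv 3 f y| ≤ M) (x₀ x : ℝ) :
    |f x - (f x₀ + deriv f x₀ * (x - x₀) + deriv (deriv f) x₀ * (x - x₀) ^ 2 / 2)|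
      ≤ M * |x - x₀| ^ 3 / 6 := by
  simpa [Finset.sum_range_succ, iteratedDeriv_succ, Nat.factorial] using
    abs_sub_taylor_le (n := 2) hf hb x₀ x

theorem abs_centralDiff_sub_deriv_deriv_le {f : ℝ → ℝ} {M : ℝ} (hf : ContDiff ℝ 3 f)
    (hb : ∀ y, |iteratedDeriv 3 f y| ≤ M) (x : ℝ) {h : ℝ} (hh : h ≠ 0) :
    |(f (x + h) - 2 * f x + f (x - h)) / h ^ 2 - deriv (deriv f) x| ≤ M * |h| / 3 := by
  have hplus := abs_sub_taylor_two_le hf hb x (x + h)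
  have hminus := abs_sub_taylor_two_le hf hb x (x - h)
  simp only [add_sub_cancel_left, sub_sub_cancel_left, abs_neg] at hplus hminus
  have hsplit : (f (x + h) - 2 * f x + f (x - h)) / h ^ 2 - deriv (deriv f) x
      = ((f (x + h) - (f x + deriv f x * h + deriv (deriv f) x * h ^ 2 / 2))
          + (f (x - h) - (f x + deriv f x * -h + deriv (deriv f) x * (-h) ^ 2 / 2))) / h ^ 2 := by
    field_simp
    ring
  rw [hsplit, abs_div, abs_pow]
  calc _ ≤ (M * |h| ^ 3 / 6 + M * |h| ^ 3 / 6) / |h| ^ 2 := by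
        gcongr
        exact (abs_add_le _ _).trans (add_le_add hplus hminus)
    _ = M * |h| / 3 := by
        field_simp
        ring

theorem abs_sub_sub_jump_le {f g : ℝ → ℝ} {M a : ℝ} (hf : ContDiff ℝ 3 f) (hg : ContDiff ℝ 3 g)
    (hbf : ∀ y, |iteratedDeriv 3 f y| ≤ M) (hbg : ∀ y, |iteratedDeriv 3 g y| ≤ M)
    (h₀ : f a = g a) (h₁ : deriv f a = deriv g a) (x : ℝ) :
    |f x - g x - (deriv (deriv f) a - deriv (deriv g) a) * (x - a) ^ 2 / 2|
      ≤ M * |x - a| ^ 3 / 3 := by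
  have hsub : ∀ k ≤ 3, ∀ y, iteratedDeriv k (f - g) y = iteratedDeriv k f y - iteratedDeriv k g y :=
    fun k hk y => iteratedDeriv_sub (hf.contDiffAt.of_le (by exact_mod_cast hk))
      (hg.contDiffAt.of_le (by exact_mod_cast hk))
  have hb : ∀ y, |iteratedDeriv 3 (f - g) y| ≤ M + M := fun y => by
    rw [hsub 3 le_rfl]
    exact (abs_sub _ _).trans (add_le_add (hbf y) (hbg y))
  have := abs_sub_taylor_le (n := 2) (f := f - g) (hf.sub hg) hb a x
  simp only [Finset.sum_range_succ, Finset.sum_range_zero, hsub 0 (by norm_num),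
    hsub 1 (by norm_num), hsub 2 (by norm_num)] at this
  simp only [iteratedDeriv_zero, iteratedDeriv_succ, h₀, h₁] at this
  convert this using 1
  · simp [Nat.factorial]
  · norm_num [Nat.factorial]
    ring

theorem stmt_10 (a J M : ℝ) (hM : 0 ≤ M) (vL vR v : ℝ → ℝ)
    (hvL : ContDiff ℝ 3 vL) (hvR : ContDiff ℝ 3 vR)
    (hbL : ∀ x, |iteratedDeriv 3 vL x| ≤ M)
    (hbR : ∀ x, |iteratedDeriv 3 vR x| ≤ M)
    (hv : ∀ x, v x = if x < a then vL x else vR x)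
    (hj0 : vL a = vR a)                                -- [v](a) = 0
    (hj1 : deriv vL a = deriv vR a)                    -- [v'](a) = 0
    (hj2 : deriv (deriv vL) a - deriv (deriv vR) a = J) -- [v''](a) = J
    :
    ∃ C : ℝ, ∀ h : ℝ, 0 < h → ∀ xim1 : ℝ, xim1 < a → a ≤ xim1 + h →
      |(v (xim1 + 2*h) - 2 * v (xim1 + h) + v xim1) / h^2
          - deriv (deriv vR) (xim1 + h)
          - (a - xim1)^2 * J / (2 * h^2)| ≤ C * h := by
  refine ⟨2 * M / 3, fun h hh p hpa hap => ?_⟩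
  have hcentral := abs_centralDiff_sub_deriv_deriv_le hvR hbR (p + h) hh.ne'
  rw [abs_of_pos hh, add_sub_cancel_right, show p + h + h = p + 2 * h by ring] at hcentral
  have hjump : |(vL p - vR p - J * (p - a) ^ 2 / 2) / h ^ 2| ≤ M * h / 3 := by
    have hdist : |p - a| ≤ h := by
      rw [abs_sub_comm, abs_of_pos (sub_pos.2 hpa)]
      linarith
    rw [abs_div, abs_of_pos (by positivity : (0 : ℝ) < h ^ 2), div_le_iff₀ (by positivity), ← hj2]
    calc _ ≤ M * |p - a| ^ 3 / 3 := abs_sub_sub_jump_le hvL hvR hbL hbR hj0 hj1 p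
      _ ≤ M * h ^ 3 / 3 := by gcongr
      _ = M * h / 3 * h ^ 2 := by ring
  have hsplit : (v (p + 2 * h) - 2 * v (p + h) + v p) / h ^ 2 - deriv (deriv vR) (p + h)
        - (a - p) ^ 2 * J / (2 * h ^ 2)
      = ((vR (p + 2 * h) - 2 * vR (p + h) + vR p) / h ^ 2 - deriv (deriv vR) (p + h))
        + (vL p - vR p - J * (p - a) ^ 2 / 2) / h ^ 2 := by
    simp only [hv, if_pos hpa, if_neg (not_lt.2 hap), if_neg (by linarith : ¬ p + 2 * h < a)]
    field_simp
    ring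
  rw [hsplit]
  exact (abs_add_le _ _).trans (by linarith)
end
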